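/- arXiv:1711.00985 — 8 statements merged into one kernel-verified Lean document; each statement's English description precedes it below -/
import Mathlib

section
/- For all integers m, n and natural number k, (m-n)·C(m+n+1, k) = Σ_{i=0}^{k} (m-n-k+2i)·C(m+1, k-i)·C(n+1, i), where C denotes the binomial coefficient extended to integer upper argument. -/
open Finset Polynomial

private lemma desc_smeval_eq_eval (p : Polynomial ℤ) (x : ℤ) : p.smeval x = p.eval x :=
  (Polynomial.eval_eq_smeval x p).symm

private lemma key (x : ℤ) (j : ℕ) :
    (x - j) * Ring.choose x j = x * Ring.choose (x - 1) j := by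
  have h := Ring.descPochhammer_eq_factorial_smul_choose (R := ℤ) x j
  have h' := Ring.descPochhammer_eq_factorial_smul_choose (R := ℤ) (x - 1) j
  rw [desc_smeval_eq_eval] at h h'
  have h1 : (descPochhammer ℤ (j + 1)).eval x = (descPochhammer ℤ j).eval x * (x - j) :=
    descPochhammer_succ_eval j x
  have h2 : (descPochhammer ℤ (j + 1)).eval x = x * (descPochhammer ℤ j).eval (x - 1) := by
    rw [descPochhammer_succ_left, eval_mul, eval_X, eval_comp, eval_sub, eval_X, eval_one]
  have h3 : (j.factorial : ℤ) * ((x - j) * Ring.choose x j)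
      = (j.factorial : ℤ) * (x * Ring.choose (x - 1) j) := by
    have := h1.symm.trans h2
    rw [h, h'] at this
    simp only [nsmul_eq_mul] at this
    ring_nf
    ring_nf at this
    linarith
  exact mul_left_cancel₀ (by exact_mod_cast j.factorial_ne_zero) h3

private lemma vand (r s : ℤ) (k : ℕ) :
    ∑ i ∈ range (k + 1), Ring.choose r (k - i) * Ring.choose s i
      = Ring.choose (r + s) k := by
  rw [Ring.add_choose_eq k (Commute.all r s),
    Finset.Nat.sum_antidiagonal_eq_sum_range_succ_mk]
  rw [← Finset.sum_range_reflect]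
  simp only [Nat.add_sub_cancel]
  refine Finset.sum_congr rfl fun i hi => ?_
  have hik : i ≤ k := Nat.lt_succ_iff.mp (Finset.mem_range.mp hi)
  rw [Nat.sub_sub_self hik, mul_comm]

/-- For all integers `m, n` and natural number `k`,
`(m-n)·C(m+n+1, k) = Σ_{i=0}^{k} (m-n-k+2i)·C(m+1, k-i)·C(n+1, i)`,
where `C` is the binomial coefficient with integer upper argument
(`Ring.choose` on `ℤ`). -/
theorem statement0 (m n : ℤ) (k : ℕ) :
    (m - n) * Ring.choose (m + n + 1) k =
      ∑ i ∈ Finset.range (k + 1),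
        (m - n - (k : ℤ) + 2 * (i : ℤ)) * Ring.choose (m + 1) (k - i) *
          Ring.choose (n + 1) i := by
  have hterm : ∀ i ∈ range (k + 1),
      (m - n - (k : ℤ) + 2 * (i : ℤ)) * Ring.choose (m + 1) (k - i) *
          Ring.choose (n + 1) i
      = (m + 1) * (Ring.choose m (k - i) * Ring.choose (n + 1) i)
        - (n + 1) * (Ring.choose (m + 1) (k - i) * Ring.choose n i) := by
    intro i hi
    have hik : i ≤ k := Nat.lt_succ_iff.mp (Finset.mem_range.mp hi)
    have hcast : ((k - i : ℕ) : ℤ) = (k : ℤ) - i := by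
      exact Nat.cast_sub hik
    have h1 : (m + 1 - ((k - i : ℕ) : ℤ)) * Ring.choose (m + 1) (k - i)
        = (m + 1) * Ring.choose m (k - i) := by
      simpa using key (m + 1) (k - i)
    have h2 : (n + 1 - (i : ℤ)) * Ring.choose (n + 1) i
        = (n + 1) * Ring.choose n i := by
      simpa using key (n + 1) i
    have hsplit : m - n - (k : ℤ) + 2 * (i : ℤ)
        = (m + 1 - ((k - i : ℕ) : ℤ)) - (n + 1 - (i : ℤ)) := by
      rw [hcast]; ring
    rw [hsplit]
    linear_combination Ring.choose (n + 1) i * h1 - Ring.choose (m + 1) (k - i) * h2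
  rw [Finset.sum_congr rfl hterm, Finset.sum_sub_distrib, ← Finset.mul_sum, ← Finset.mul_sum,
    vand m (n + 1) k]
  have : ∑ i ∈ range (k + 1), Ring.choose (m + 1) (k - i) * Ring.choose n i
      = Ring.choose (m + n + 1) k := by
    rw [vand (m + 1) n k]; ring_nf
  rw [this]
  have : m + (n + 1) = m + n + 1 := by ring
  rw [this]
  ring
end

section
/- For all integers m, n and natural number k, Σ_{i=0}^{k} C(m+1, k-i)·C(n+1, i)·C(m-k+i+1, 3)·δ_{m+n-k,0} = C(m+1, 3)·δ_{m+n,0}·δ_{k,0}, where δ denotes the Kronecker delta. -/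
/-!
Trinomial revision `C(a, j) C(a - j, 3) = C(a, 3) C(a - 3, j)` pulls `C(m + 1, 3)` out of every
term, and Chu–Vandermonde then sums the remaining product to `C(m + n - 1, k)`. On the support
`m + n = k` of the delta this is `C(k - 1, k)`, which vanishes unless `k = 0`.
-/

open Finset

namespace Ring

variable {R : Type*}

theorem choose_mul_choose_sub [Ring R] [BinomialRing R] (r : R) (j l : ℕ) :
    choose r j * choose (r - j) l = choose r l * choose (r - l) j := by
  have hj := choose_smul_choose r (Nat.le_add_right j l)
  have hl := choose_smul_choose r (Nat.le_add_left l j)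
  rw [Nat.add_sub_cancel_left, Nat.choose_symm_add] at hj
  rw [Nat.add_sub_cancel] at hl
  exact hj.symm.trans hl

theorem sum_choose_mul_choose_mul_choose_sub [CommRing R] [BinomialRing R] (a b : R) (k l : ℕ) :
    ∑ i ∈ range (k + 1), choose a (k - i) * choose b i * choose (a - k + i) l =
      choose a l * choose (b + (a - l)) k := by
  rw [add_choose_eq k (Commute.all _ _), Nat.sum_antidiagonal_eq_sum_range_succ_mk, mul_sum]
  refine sum_congr rfl fun i hi => ?_
  have hik : i ≤ k := Nat.lt_succ_iff.mp (mem_range.mp hi)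
  have hshift : a - k + i = a - ((k - i : ℕ) : R) := by
    rw [Nat.cast_sub hik]; abel
  rw [hshift, mul_right_comm, choose_mul_choose_sub]
  ring

end Ring

/-- For all integers `m, n` and natural number `k`,
`Σ_{i=0}^{k} C(m+1, k-i)·C(n+1, i)·C(m-k+i+1, 3)·δ_{m+n-k,0}
  = C(m+1, 3)·δ_{m+n,0}·δ_{k,0}`,
where `C` is the binomial coefficient with integer upper argument and `δ` the
Kronecker delta. -/
theorem statement1 (m n : ℤ) (k : ℕ) :
    (∑ i ∈ Finset.range (k + 1),
        Ring.choose (m + 1) (k - i) * Ring.choose (n + 1) i *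
          Ring.choose (m - (k : ℤ) + (i : ℤ) + 1) 3 *
            (if m + n - (k : ℤ) = 0 then (1 : ℤ) else 0)) =
      Ring.choose (m + 1) 3 * (if m + n = 0 then (1 : ℤ) else 0) *
        (if k = 0 then (1 : ℤ) else 0) := by
  rcases k.eq_zero_or_pos with rfl | hk
  · simp
  rw [if_neg hk.ne', mul_zero, ← sum_mul]
  split_ifs with hmn
  · have hshift : ∀ i : ℕ, m - (k : ℤ) + i + 1 = (m + 1) - k + i := fun i => by ring
    have htop : (n + 1) + ((m + 1 : ℤ) - (3 : ℕ)) = ((k - 1 : ℕ) : ℤ) := by omega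
    simp only [hshift, Ring.sum_choose_mul_choose_mul_choose_sub, htop, Ring.choose_natCast,
      Nat.choose_eq_zero_of_lt (Nat.sub_lt hk one_pos)]
    simp
  · rw [mul_zero]
end

section
/- Let p be a prime, F a field of characteristic p, g a Lie algebra over F, and a₁, ..., a_p elements of g. Then in the universal enveloping algebra U(g), Σ_{σ ∈ S_p} a_{σ(1)} a_{σ(2)} ⋯ a_{σ(p)} = Σ_{σ ∈ S_p, σ(1)=1} [[⋯[[a_{σ(1)}, a_{σ(2)}], a_{σ(3)}], ⋯], a_{σ(p)}], where the sum on the right is over permutations fixing 1 and the bracket is the Lie bracket computed in g and viewed inside U(g). -/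
/-!
Put `x = a₁` and let `π` range over the permutations of the other `n = p - 1` letters. Grouping
the words on the left by the position `k` of `x` turns the left hand side into
`∑ₖ ∑_π a_{π 1} ⋯ a_{π k} x a_{π (k+1)} ⋯ a_{π n}`. Expanding `[⋯[x, a_{π 1}], ⋯, a_{π n}]` by
peeling off the last letter, which is either appended to the word or prepended (moving `x` one
place to the right), one shows by induction on `n` that the right hand side is the same double
sum with weights `(-1)ᵏ (n choose k)`. For `n = p - 1` these weights are `1` modulo `p`.
-/

open UniversalEnvelopingAlgebra

attribute [local instance 100] LieRing.ofAssociativeRing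

/-- The left-nested iterated Lie bracket `[[⋯[[x₁,x₂],x₃],⋯],x_r]` of a list
`[x₁, …, x_r]` (and `0` for the empty list). -/
def nestedBracket {L : Type*} [LieRing L] : List L → L
  | [] => 0
  | x :: xs => xs.foldl (fun u v => ⁅u, v⁆) x

open Equiv Finset

theorem List.insertIdx_append_of_le_length {α : Type*} (l₁ l₂ : List α) {k : ℕ} (x : α)
    (h : k ≤ l₁.length) : (l₁ ++ l₂).insertIdx k x = l₁.insertIdx k x ++ l₂ := by
  induction l₁ generalizing k with
  | nil => simp_all
  | cons a l ih => cases k <;> simp_all [List.insertIdx_succ_cons]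

theorem List.ofFn_insertNth {α : Type*} {n : ℕ} (k : Fin (n + 1)) (a : α) (w : Fin n → α) :
    List.ofFn (Fin.insertNth k a w) = (List.ofFn w).insertIdx k a := by
  induction n with
  | zero =>
    cases k using Fin.cases with
    | zero => simp [Fin.insertNth_zero']
    | succ k => exact k.elim0
  | succ n ih =>
    cases k using Fin.cases with
    | zero => simp [Fin.insertNth_zero']
    | succ k =>
      rw [← Fin.cons_self_tail w, Fin.insertNth_succ_cons, List.ofFn_cons, List.ofFn_cons, ih]
      simp [List.insertIdx_succ_cons]

theorem List.ofFn_comp_finRotate {α : Type*} {n : ℕ} (f : Fin (n + 1) → α) :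
    List.ofFn (f ∘ finRotate (n + 1)) = (List.ofFn f).rotate 1 := by
  rw [List.ofFn_succ', List.concat_eq_append, List.ofFn_succ]
  simp [Fin.coeSucc_eq_succ]

theorem List.ofFn_comp_decomposeFin_symm {α : Type*} {n : ℕ} (f : Fin (n + 1) → α)
    (i : Fin (n + 1)) (ρ : Equiv.Perm (Fin n)) :
    List.ofFn (f ∘ Perm.decomposeFin.symm (i, ρ)) =
      f i :: List.ofFn ((f ∘ Equiv.swap 0 i ∘ Fin.succ) ∘ ρ) := by
  simp [List.ofFn_succ, Perm.decomposeFin_symm_apply_succ]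
  rfl

section PermSums

variable {α M : Type*} [AddCommMonoid M] {n : ℕ}

theorem sum_perm_fin_succ_cons (f : Fin (n + 1) → α) (G : List α → M) :
    ∑ τ : Perm (Fin (n + 1)), G (List.ofFn (f ∘ τ)) =
      ∑ i, ∑ ρ : Perm (Fin n), G (f i :: List.ofFn ((f ∘ swap 0 i ∘ Fin.succ) ∘ ρ)) := by
  rw [← Perm.decomposeFin.symm.sum_comp, Fintype.sum_prod_type]
  simp only [List.ofFn_comp_decomposeFin_symm]

theorem sum_perm_fin_succ_append_singleton (f : Fin (n + 1) → α) (G : List α → M) :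
    ∑ τ : Perm (Fin (n + 1)), G (List.ofFn (f ∘ τ)) =
      ∑ i, ∑ ρ : Perm (Fin n), G (List.ofFn ((f ∘ swap 0 i ∘ Fin.succ) ∘ ρ) ++ [f i]) := by
  calc ∑ τ : Perm (Fin (n + 1)), G (List.ofFn (f ∘ τ))
      = ∑ τ : Perm (Fin (n + 1)), G ((List.ofFn (f ∘ τ)).rotate 1) := by
        rw [← Equiv.sum_comp (Equiv.mulRight (finRotate (n + 1)))]
        simp only [Equiv.coe_mulRight, Perm.coe_mul, ← Function.comp_assoc,
          List.ofFn_comp_finRotate]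
    _ = _ := by
        rw [sum_perm_fin_succ_cons f (fun l => G (l.rotate 1))]
        simp

theorem sum_filter_perm_apply_zero_eq_zero (H : Perm (Fin (n + 1)) → M) :
    ∑ σ ∈ univ.filter (fun σ : Perm (Fin (n + 1)) => σ 0 = 0), H σ =
      ∑ ρ : Perm (Fin n), H (Perm.decomposeFin.symm (0, ρ)) := by
  rw [sum_filter, ← Perm.decomposeFin.symm.sum_comp, Fintype.sum_prod_type]
  simp [Perm.decomposeFin_symm_apply_zero]

theorem sum_perm_fin_succ_insertIdx (f : Fin (n + 1) → α) (G : List α → M) :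
    ∑ τ : Perm (Fin (n + 1)), G (List.ofFn (f ∘ τ)) =
      ∑ k : Fin (n + 1), ∑ ρ : Perm (Fin n),
        G ((List.ofFn (f ∘ Fin.succ ∘ ρ)).insertIdx k (f 0)) := by
  rw [← sum_fiberwise univ (fun τ : Perm (Fin (n + 1)) => τ⁻¹ 0)]
  refine sum_congr rfl fun k _ => ?_
  -- The `τ` with `τ k = 0` are the `σ * cycleRange k` with `σ 0 = 0`.
  have hinsert (ρ : Perm (Fin n)) : Fin.insertNth k (f 0) (f ∘ Fin.succ ∘ ρ) =
      f ∘ (Perm.decomposeFin.symm (0, ρ) * Fin.cycleRange k) := by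
    rw [← Fin.cons_comp_cycleRange, Perm.coe_mul]
    ext j
    simp only [Function.comp_apply]
    cases k.cycleRange j using Fin.cases <;> simp [Perm.decomposeFin_symm_apply_succ]
  simp only [← List.ofFn_insertNth, hinsert]
  rw [← sum_filter_perm_apply_zero_eq_zero
    (fun σ : Perm (Fin (n + 1)) => G (List.ofFn (f ∘ ⇑(σ * Fin.cycleRange k))))]
  apply sum_equiv (Equiv.mulRight (Fin.cycleRange k)).symm
  · intro τ
    simp [Equiv.eq_symm_apply, eq_comm]
  · intro τ _
    simp

end PermSums

theorem sum_range_alternating_choose_smul_sub {M : Type*} [AddCommGroup M] (n : ℕ)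
    (a : ℕ → M) :
    ∑ k ∈ range (n + 1), ((-1 : ℤ) ^ k * n.choose k) • (a k - a (k + 1)) =
      ∑ k ∈ range (n + 2), ((-1 : ℤ) ^ k * (n + 1).choose k) • a k := by
  have hshift : ∑ k ∈ range (n + 1), ((-1 : ℤ) ^ k * n.choose k) • a k =
      a 0 + ∑ k ∈ range (n + 1), ((-1 : ℤ) ^ (k + 1) * n.choose (k + 1)) • a (k + 1) := by
    rw [sum_range_succ' _ n, sum_range_succ _ n]
    simp [add_comm]
  rw [sum_range_succ' _ (n + 1)]
  simp only [smul_sub, sum_sub_distrib, hshift, Nat.choose_succ_succ, Nat.cast_add, mul_add,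
    add_smul, sum_add_distrib, pow_succ]
  simp only [mul_neg, mul_one, neg_mul, neg_smul, sum_neg_distrib, pow_zero,
    Nat.choose_zero_right, Nat.cast_one, one_smul]
  abel

theorem nestedBracket_cons_append_singleton {L : Type*} [LieRing L] (x y : L) (l : List L) :
    nestedBracket (x :: (l ++ [y])) = ⁅nestedBracket (x :: l), y⁆ := by
  simp [nestedBracket]

theorem LieHom.map_nestedBracket {R L L' : Type*} [CommRing R] [LieRing L] [LieAlgebra R L]
    [LieRing L'] [LieAlgebra R L'] (φ : L →ₗ⁅R⁆ L') (l : List L) :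
    φ (nestedBracket l) = nestedBracket (l.map φ) := by
  rcases l with _ | ⟨x, l⟩
  · simp [nestedBracket]
  · induction l generalizing x with
    | nil => simp [nestedBracket]
    | cons y l ih => simpa [nestedBracket] using ih ⁅x, y⁆

theorem lie_prod_insertIdx {A : Type*} [Ring A] {l : List A} {k : ℕ} (x y : A)
    (hk : k ≤ l.length) :
    ⁅(l.insertIdx k x).prod, y⁆ =
      ((l ++ [y]).insertIdx k x).prod - ((y :: l).insertIdx (k + 1) x).prod := by
  rw [Ring.lie_def, List.insertIdx_append_of_le_length _ _ _ hk, List.prod_append,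
    List.insertIdx_succ_cons, List.prod_cons, List.prod_cons, List.prod_nil, mul_one]

theorem sum_perm_nestedBracket_cons {A : Type*} [Ring A] (x : A) {n : ℕ} (f : Fin n → A) :
    ∑ π : Perm (Fin n), nestedBracket (x :: List.ofFn (f ∘ π)) =
      ∑ π : Perm (Fin n), ∑ k ∈ range (n + 1),
        ((-1 : ℤ) ^ k * n.choose k) • ((List.ofFn (f ∘ π)).insertIdx k x).prod := by
  induction n with
  | zero => simp [nestedBracket]
  | succ n ih =>
    set P : List A → ℕ → A := fun l k => (l.insertIdx k x).prod
    set w : Fin (n + 1) → Perm (Fin n) → List A :=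
      fun i ρ => List.ofFn ((f ∘ swap 0 i ∘ Fin.succ) ∘ ρ)
    calc ∑ π : Perm (Fin (n + 1)), nestedBracket (x :: List.ofFn (f ∘ π))
        = ∑ i, ∑ ρ : Perm (Fin n), ∑ k ∈ range (n + 1),
            ((-1 : ℤ) ^ k * n.choose k) • ⁅P (w i ρ) k, f i⁆ := by
          simp only [sum_perm_fin_succ_append_singleton f (fun l => nestedBracket (x :: l)),
            nestedBracket_cons_append_singleton, ← sum_lie, ih]
          simp only [sum_lie, zsmul_lie]
          rfl
      _ = ∑ k ∈ range (n + 1), ((-1 : ℤ) ^ k * n.choose k) •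
            (∑ i, ∑ ρ : Perm (Fin n), P (w i ρ ++ [f i]) k -
              ∑ i, ∑ ρ : Perm (Fin n), P (f i :: w i ρ) (k + 1)) := by
          rw [sum_congr rfl fun i _ => sum_congr rfl fun ρ _ => sum_congr rfl fun k hk => by
            rw [lie_prod_insertIdx x (f i) (by simpa [w, Nat.lt_succ_iff] using hk)]]
          simp only [smul_sub, smul_sum, sum_sub_distrib, sum_comm (t := range (n + 1))]
          rfl
      _ = ∑ k ∈ range (n + 1), ((-1 : ℤ) ^ k * n.choose k) •
            (∑ τ : Perm (Fin (n + 1)), P (List.ofFn (f ∘ τ)) k -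
              ∑ τ : Perm (Fin (n + 1)), P (List.ofFn (f ∘ τ)) (k + 1)) := by
          refine sum_congr rfl fun k _ => ?_
          rw [sum_perm_fin_succ_append_singleton f (P · k),
            sum_perm_fin_succ_cons f (P · (k + 1))]
      _ = _ := by
          rw [sum_range_alternating_choose_smul_sub, sum_comm]
          simp only [smul_sum, P]

theorem neg_one_pow_mul_choose_pred_eq_one (R : Type*) [Ring R] {p : ℕ} [CharP R p]
    (hp : p.Prime) {k : ℕ} (hk : k < p) : (-1 : R) ^ k * ((p - 1).choose k : R) = 1 := by
  induction k with
  | zero => simp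
  | succ k ih =>
    have hpascal : ((p - 1).choose k : R) + ((p - 1).choose (k + 1) : R) = 0 := by
      rw [← Nat.cast_add, ← Nat.choose_succ_succ', Nat.sub_add_cancel hp.one_le,
        CharP.cast_eq_zero_iff R p]
      exact hp.dvd_choose_self k.succ_ne_zero hk
    rw [eq_neg_of_add_eq_zero_right hpascal, pow_succ, mul_neg_one, neg_mul_neg]
    exact ih (by omega)

/-- Cohen–Meurman–Norton identity. Let `p` be a prime, `F` a
field of characteristic `p`, `g` a Lie algebra over `F` and `a₁, …, a_p ∈ g`.
Then in `U(g)`: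
`Σ_{σ ∈ S_p} a_{σ(1)} ⋯ a_{σ(p)}
  = Σ_{σ ∈ S_p, σ(1)=1} [[⋯[[a_{σ(1)}, a_{σ(2)}], a_{σ(3)}], ⋯], a_{σ(p)}]`. -/
theorem statement6 (p : ℕ) (hp : p.Prime) (F : Type*) [Field F] [CharP F p]
    (g : Type*) [LieRing g] [LieAlgebra F g] (a : Fin p → g) :
    ∑ σ : Equiv.Perm (Fin p),
        (List.ofFn fun i => (ι F : g →ₗ⁅F⁆ UniversalEnvelopingAlgebra F g)
          (a (σ i))).prod =
      ∑ σ ∈ Finset.univ.filter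
          (fun σ : Equiv.Perm (Fin p) => σ ⟨0, hp.pos⟩ = ⟨0, hp.pos⟩),
        (ι F : g →ₗ⁅F⁆ UniversalEnvelopingAlgebra F g)
          (nestedBracket (List.ofFn fun i => a (σ i))) := by
  obtain ⟨n, rfl⟩ := Nat.exists_eq_add_one_of_ne_zero hp.ne_zero
  set b : Fin (n + 1) → UniversalEnvelopingAlgebra F g := fun i => ι F (a i)
  have hcoeff (k : ℕ) (hk : k < n + 1) (u : UniversalEnvelopingAlgebra F g) :
      ((-1 : ℤ) ^ k * n.choose k) • u = u := by
    rw [← Int.cast_smul_eq_zsmul F]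
    have h := neg_one_pow_mul_choose_pred_eq_one F hp hk
    rw [Nat.add_sub_cancel] at h
    push_cast
    rw [h, one_smul]
  calc ∑ τ : Perm (Fin (n + 1)), (List.ofFn (b ∘ τ)).prod
      = ∑ π : Perm (Fin n), ∑ k ∈ range (n + 1),
          ((-1 : ℤ) ^ k * n.choose k) •
            ((List.ofFn ((b ∘ Fin.succ) ∘ π)).insertIdx k (b 0)).prod := by
        rw [sum_perm_fin_succ_insertIdx b List.prod, sum_comm]
        refine sum_congr rfl fun π _ => ?_
        rw [Fin.sum_univ_eq_sum_range (fun k => ((List.ofFn _).insertIdx k (b 0)).prod)]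
        exact sum_congr rfl fun k hk => (hcoeff k (mem_range.1 hk) _).symm
    _ = ∑ π : Perm (Fin n), nestedBracket (b 0 :: List.ofFn ((b ∘ Fin.succ) ∘ π)) :=
        (sum_perm_nestedBracket_cons (b 0) (b ∘ Fin.succ)).symm
    _ = _ := by
        rw [Fin.zero_eta, sum_filter_perm_apply_zero_eq_zero]
        refine sum_congr rfl fun ρ _ => ?_
        have hword := List.ofFn_comp_decomposeFin_symm b 0 ρ
        rw [swap_self, coe_refl, Function.id_comp] at hword
        rw [LieHom.map_nestedBracket, List.map_ofFn]
        exact congrArg nestedBracket hword.symm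
end

section
/- Let F be a field of characteristic p > 2 and let Vir be the Virasoro algebra over F, with basis {L_n : n ∈ ℤ} ∪ {c}, c central and [L_m, L_n] = (m-n) L_{m+n} + (1/2) C(m+1, 3) δ_{m+n,0} c. Then for all m, n ∈ ℤ: (ad L_m)^p (L_n) = (∏_{i=0}^{p-1} (-n - (i-1)m)) · L_{pm+n}, where ad denotes the adjoint action. -/
/-- Let `F` be a field of characteristic `p > 2` and `Vir` the
Virasoro algebra over `F`: a Lie algebra with basis `{L n : n ∈ ℤ} ∪ {c}`,
where `c` is central and
`[L m, L n] = (m-n)·L (m+n) + (1/2)·C(m+1,3)·δ_{m+n,0}·c`.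
Then for all `m n : ℤ`:
`(ad (L m))^p (L n) = (∏_{i=0}^{p-1} (-n - (i-1)·m)) • L (p·m + n)`. -/
theorem statement8 (p : ℕ) (hp : p.Prime) (hp2 : 2 < p)
    (F : Type*) [Field F] [CharP F p]
    (Vir : Type*) [LieRing Vir] [LieAlgebra F Vir]
    (L : ℤ → Vir) (c : Vir)
    (hc : ∀ x : Vir, ⁅c, x⁆ = 0)
    (hbracket : ∀ m n : ℤ, ⁅L m, L n⁆ =
      ((m - n : ℤ) : F) • L (m + n) +
        (if m + n = 0 then (2⁻¹ : F) * ((Ring.choose (m + 1) 3 : ℤ) : F)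
          else 0) • c)
    (m n : ℤ) :
    ((LieAlgebra.ad F Vir (L m)) ^ p) (L n) =
      (((∏ i ∈ Finset.range p, (-n - ((i : ℤ) - 1) * m) : ℤ)) : F) •
        L (p * m + n) := by
  have hLc : ⁅L m, c⁆ = 0 := by rw [← lie_skew, hc, neg_zero]
  have key : ∀ k : ℕ, ((LieAlgebra.ad F Vir (L m)) ^ (k+1)) (L n) =
      (((∏ i ∈ Finset.range (k+1), (-n - ((i : ℤ) - 1) * m)) : ℤ) : F) •
        L ((k+1) * m + n) +
      (if ((k : ℤ)+1) * m + n = 0 then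
        (((∏ i ∈ Finset.range k, (-n - ((i : ℤ) - 1) * m)) : ℤ) : F) *
          ((2⁻¹ : F) * ((Ring.choose (m + 1) 3 : ℤ) : F)) else 0) • c := by
    intro k
    induction k with
    | zero =>
      rw [pow_one, LieAlgebra.ad_apply, hbracket m n, Finset.prod_range_one,
        Finset.prod_range_zero]
      norm_num
      rw [sub_eq_neg_add]
    | succ k ih =>
      rw [pow_succ', Module.End.mul_apply, ih, map_add, map_smul, map_smul,
        LieAlgebra.ad_apply, LieAlgebra.ad_apply, hLc, smul_zero, add_zero,
        hbracket m (((k:ℤ)+1) * m + n), smul_add, smul_smul, smul_smul]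
      have hidx : m + (((k:ℤ)+1) * m + n) = ((↑(k+1) : ℤ) + 1) * m + n := by
        push_cast; ring
      rw [hidx]
      congr 1
      · congr 1
        rw [← Int.cast_mul]
        congr 1
        rw [Finset.prod_range_succ _ (k+1)]
        push_cast; ring
      · rw [mul_ite, mul_zero]
  obtain ⟨q, hq⟩ : ∃ q, p = q + 1 := ⟨p - 1, by omega⟩
  subst hq
  rw [key q]
  have : (if ((q : ℤ)+1) * m + n = 0 then
      (((∏ i ∈ Finset.range q, (-n - ((i : ℤ) - 1) * m)) : ℤ) : F) *
        ((2⁻¹ : F) * ((Ring.choose (m + 1) 3 : ℤ) : F)) else 0) = 0 := by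
    split
    · rename_i h0
      have hn : ((n : F)) = 0 := by
        have : (n : ℤ) = -((q:ℤ)+1) * m := by linarith
        rw [this]
        push_cast
        have : ((q:F)+1) = ((q+1 : ℕ) : F) := by push_cast; ring
        rw [neg_mul, this, CharP.cast_eq_zero F (q+1)]
        ring
      have : ((∏ i ∈ Finset.range q, (-n - ((i : ℤ) - 1) * m) : ℤ) : F) = 0 := by
        push_cast
        apply Finset.prod_eq_zero (i := 1)
        · simp; omega
        · push_cast; rw [hn]; ring
      rw [this, zero_mul]
    · rfl
  rw [this, zero_smul, add_zero]
  norm_num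
end

section
/- Let F be a field of characteristic p > 2 and Vir the Virasoro algebra over F. If p does not divide m, then (ad L_m)^p = 0 as a linear operator on Vir; if p divides m, then (ad L_m)^p = ad L_{pm}. -/
/-!
Modulo the centre, induction on `k` gives
`(ad L m)^k (L n) ≡ (∏_{j<k} (m - n - j m)) • L (n + k m)`. Since `c` is central, a central
term of `(ad L m)^p (L n)` can only come from the last bracket, which is central only when
`n = -p m`; the factor `j = 1` of the product is then `-n = p m = 0` in `F`.
If `p ∤ m`, the factors `(m - n) - j m` (`j < p`) run through all residues mod `p`, so one
vanishes. If `p ∣ m`, every factor equals `m - n`, and `(m - n)^p = m - n` is the coefficient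
of `⁅L (p m), L n⁆`; the central term of that bracket vanishes because
`6 · C(p m + 1, 3) = (p m + 1) (p m) (p m - 1)` is divisible by `p²` while `p² ∤ 6`.
-/

open Finset LieAlgebra

lemma Int.six_mul_choose_three (z : ℤ) : 6 * Ring.choose z 3 = z * (z - 1) * (z - 2) := by
  have h := Ring.descPochhammer_eq_factorial_smul_choose z 3
  rw [← Polynomial.eval_eq_smeval] at h
  simp only [descPochhammer, Polynomial.one_comp, mul_one, Polynomial.X_comp,
    Polynomial.mul_comp, Polynomial.sub_comp, Polynomial.eval_mul, Polynomial.eval_X,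
    Polynomial.eval_sub, Polynomial.eval_one, Nat.factorial, Nat.succ_eq_add_one, Nat.reduceAdd,
    zero_add, Nat.reduceMul, Int.nsmul_eq_mul, Nat.cast_ofNat] at h
  linarith

lemma Int.prime_dvd_choose_three_of_sq_dvd {p : ℕ} (hp : p.Prime) (hp2 : 2 < p) {z : ℤ}
    (hz : (p : ℤ) ^ 2 ∣ z) : (p : ℤ) ∣ Ring.choose (z + 1) 3 := by
  have h6 : (p : ℤ) ^ 2 ∣ Ring.choose (z + 1) 3 * 6 := by
    obtain ⟨k, rfl⟩ := hz
    rw [mul_comm, Int.six_mul_choose_three]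
    exact ⟨(p ^ 2 * k + 1) * k * (p ^ 2 * k - 1), by ring⟩
  by_contra hC
  have h6' : p ^ 2 ∣ 6 := by
    exact_mod_cast (Nat.prime_iff_prime_int.mp hp).pow_dvd_of_dvd_mul_left 2 hC h6
  have := Nat.le_of_dvd (by norm_num) h6'
  nlinarith

section CharP

variable {F : Type*} [Field F] {p : ℕ} [CharP F p]

lemma prod_range_intCast_sub_mul_eq_zero (hp : p.Prime) {a m : ℤ} (hm : ¬(p : ℤ) ∣ m) :
    ∏ j ∈ range p, ((a - j * m : ℤ) : F) = 0 := by
  have : Fact p.Prime := ⟨hp⟩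
  have hm' : (m : ZMod p) ≠ 0 := fun h => hm ((ZMod.intCast_zmod_eq_zero_iff_dvd m p).1 h)
  set u : ZMod p := (a : ZMod p) * (m : ZMod p)⁻¹
  refine prod_eq_zero (i := u.val) (mem_range.mpr u.val_lt) ?_
  rw [CharP.intCast_eq_zero_iff F p, ← ZMod.intCast_zmod_eq_zero_iff_dvd]
  push_cast
  rw [ZMod.natCast_val, ZMod.cast_id, inv_mul_cancel_right₀ hm', sub_self]

lemma prod_range_intCast_sub_mul_of_dvd (hp : p.Prime) {a m : ℤ} (hm : (p : ℤ) ∣ m) :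
    ∏ j ∈ range p, ((a - j * m : ℤ) : F) = a := by
  have hm' : (m : F) = 0 := (CharP.intCast_eq_zero_iff F p m).2 hm
  have : ExpChar F p := ExpChar.prime hp
  simp only [Int.cast_sub, Int.cast_mul, Int.cast_natCast, hm', mul_zero, sub_zero, prod_const,
    card_range]
  have h := map_intCast (frobenius F p) a
  rwa [frobenius_def] at h

end CharP

def virasoroCocycle (F : Type*) [Field F] (m n : ℤ) : F :=
  if m + n = 0 then (2⁻¹ : F) * ((Ring.choose (m + 1) 3 : ℤ) : F) else 0

lemma virasoroCocycle_of_ne {F : Type*} [Field F] {m n : ℤ} (h : m + n ≠ 0) :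
    virasoroCocycle F m n = 0 :=
  if_neg h

lemma virasoroCocycle_natCast_mul_of_dvd {F : Type*} [Field F] {p : ℕ} [CharP F p]
    (hp : p.Prime) (hp2 : 2 < p) {m : ℤ} (hm : (p : ℤ) ∣ m) (n : ℤ) :
    virasoroCocycle F (p * m) n = 0 := by
  have hpm : (p : ℤ) ^ 2 ∣ p * m := by rw [sq]; exact mul_dvd_mul_left _ hm
  unfold virasoroCocycle
  rw [(CharP.intCast_eq_zero_iff F p _).2 (Int.prime_dvd_choose_three_of_sq_dvd hp hp2 hpm),
    mul_zero, ite_self]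

structure VirasoroRelations (F : Type*) {Vir : Type*} [Field F] [LieRing Vir]
    [LieAlgebra F Vir] (L : ℤ → Vir) (c : Vir) : Prop where
  central_lie : ∀ x : Vir, ⁅c, x⁆ = 0
  lie_L_L : ∀ m n : ℤ,
    ⁅L m, L n⁆ = ((m - n : ℤ) : F) • L (m + n) + virasoroCocycle F m n • c

namespace VirasoroRelations

variable {F : Type*} [Field F] {Vir : Type*} [LieRing Vir] [LieAlgebra F Vir]
  {L : ℤ → Vir} {c : Vir}

lemma lie_central (hV : VirasoroRelations F L c) (x : Vir) : ⁅x, c⁆ = 0 := by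
  rw [← lie_skew, hV.central_lie, neg_zero]

lemma ad_pow_apply_central (hV : VirasoroRelations F L c) {k : ℕ} (hk : k ≠ 0) (x : Vir) :
    (ad F Vir x ^ k) c = 0 := by
  obtain ⟨k, rfl⟩ := Nat.exists_eq_succ_of_ne_zero hk
  rw [pow_succ, Module.End.mul_apply, ad_apply, hV.lie_central, map_zero]

lemma exists_ad_pow_apply_L (hV : VirasoroRelations F L c) (m n : ℤ) (k : ℕ) :
    ∃ β : F, (ad F Vir (L m) ^ k) (L n) =
      (∏ j ∈ range k, ((m - n - j * m : ℤ) : F)) • L (n + k * m) + β • c := by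
  induction k with
  | zero => exact ⟨0, by simp⟩
  | succ k ih =>
    obtain ⟨β, hβ⟩ := ih
    refine ⟨(∏ j ∈ range k, ((m - n - j * m : ℤ) : F)) * virasoroCocycle F m (n + k * m),
      ?_⟩
    rw [pow_succ', Module.End.mul_apply, hβ, map_add, map_smul, map_smul, ad_apply, ad_apply,
      hV.lie_L_L, hV.lie_central, smul_zero, add_zero, smul_add, smul_smul, smul_smul,
      prod_range_succ]
    congr 3 <;> push_cast <;> ring

lemma ad_pow_apply_L_of_two_lt_char (hV : VirasoroRelations F L c) {p : ℕ} [CharP F p]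
    (hp2 : 2 < p) (m n : ℤ) :
    (ad F Vir (L m) ^ p) (L n) =
      (∏ j ∈ range p, ((m - n - j * m : ℤ) : F)) • L (n + p * m) := by
  obtain ⟨q, rfl⟩ := Nat.exists_eq_add_one_of_ne_zero (by omega : p ≠ 0)
  obtain ⟨β, hβ⟩ := hV.exists_ad_pow_apply_L m n q
  rw [pow_succ', Module.End.mul_apply, hβ, map_add, map_smul, map_smul, ad_apply, ad_apply,
    hV.lie_L_L, hV.lie_central, smul_zero, add_zero, smul_add, smul_smul, smul_smul,
    prod_range_succ]
  have hcentral :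
      (∏ j ∈ range q, ((m - n - j * m : ℤ) : F)) * virasoroCocycle F m (n + q * m) = 0 := by
    by_cases h : m + (n + q * m) = 0
    · refine mul_eq_zero_of_left (prod_eq_zero (i := 1) (mem_range.2 (by omega)) ?_) _
      rw [CharP.intCast_eq_zero_iff F (q + 1)]
      exact ⟨m, by push_cast; linarith⟩
    · rw [virasoroCocycle_of_ne h, mul_zero]
  rw [hcentral, zero_smul, add_zero]
  congr 2 <;> push_cast <;> ring

lemma ad_pow_apply_L_of_not_dvd (hV : VirasoroRelations F L c) {p : ℕ} [CharP F p]
    (hp : p.Prime) (hp2 : 2 < p) {m : ℤ} (hm : ¬(p : ℤ) ∣ m) (n : ℤ) :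
    (ad F Vir (L m) ^ p) (L n) = 0 := by
  rw [hV.ad_pow_apply_L_of_two_lt_char hp2, prod_range_intCast_sub_mul_eq_zero hp hm, zero_smul]

lemma ad_pow_apply_L_of_dvd (hV : VirasoroRelations F L c) {p : ℕ} [CharP F p]
    (hp : p.Prime) (hp2 : 2 < p) {m : ℤ} (hm : (p : ℤ) ∣ m) (n : ℤ) :
    (ad F Vir (L m) ^ p) (L n) = ad F Vir (L (p * m)) (L n) := by
  have hcoeff : ((m - n : ℤ) : F) = ((p * m - n : ℤ) : F) := by
    rw [← sub_eq_zero, ← Int.cast_sub, CharP.intCast_eq_zero_iff F p]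
    obtain ⟨k, rfl⟩ := hm
    exact ⟨k * (1 - p), by ring⟩
  rw [hV.ad_pow_apply_L_of_two_lt_char hp2, prod_range_intCast_sub_mul_of_dvd hp hm, ad_apply,
    hV.lie_L_L, virasoroCocycle_natCast_mul_of_dvd hp hp2 hm, zero_smul, add_zero, hcoeff,
    add_comm n]

end VirasoroRelations

/-- Let `F` be a field of characteristic `p > 2` and `Vir` the
Virasoro algebra over `F` (spanned by `{L n : n ∈ ℤ} ∪ {c}` with `c` central
and `[L m, L n] = (m-n)·L (m+n) + (1/2)·C(m+1,3)·δ_{m+n,0}·c`).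
If `p ∤ m` then `(ad (L m))^p = 0`, and if `p ∣ m` then
`(ad (L m))^p = ad (L (p·m))`. -/
theorem statement9 (p : ℕ) (hp : p.Prime) (hp2 : 2 < p)
    (F : Type*) [Field F] [CharP F p]
    (Vir : Type*) [LieRing Vir] [LieAlgebra F Vir]
    (L : ℤ → Vir) (c : Vir)
    (hc : ∀ x : Vir, ⁅c, x⁆ = 0)
    (hbracket : ∀ m n : ℤ, ⁅L m, L n⁆ =
      ((m - n : ℤ) : F) • L (m + n) +
        (if m + n = 0 then (2⁻¹ : F) * ((Ring.choose (m + 1) 3 : ℤ) : F)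
          else 0) • c)
    (hspan : Submodule.span F (Set.range L ∪ {c}) = ⊤)
    (m : ℤ) :
    (¬ (p : ℤ) ∣ m → (LieAlgebra.ad F Vir (L m)) ^ p = 0) ∧
      ((p : ℤ) ∣ m →
        (LieAlgebra.ad F Vir (L m)) ^ p = LieAlgebra.ad F Vir (L (p * m))) := by
  have hV : VirasoroRelations F L c := ⟨hc, hbracket⟩
  have hc_pow : (ad F Vir (L m) ^ p) c = 0 := hV.ad_pow_apply_central hp.ne_zero _
  refine ⟨fun hm => LinearMap.ext_on hspan ?_, fun hm => LinearMap.ext_on hspan ?_⟩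
  · rintro x (⟨n, rfl⟩ | rfl)
    · exact hV.ad_pow_apply_L_of_not_dvd hp hp2 hm n
    · exact hc_pow
  · rintro x (⟨n, rfl⟩ | rfl)
    · exact hV.ad_pow_apply_L_of_dvd hp hp2 hm n
    · rw [hc_pow, ad_apply, hV.lie_central]
end

section
/- In the Zhu algebra A(V_Vir(c,0)) of the modular Virasoro vertex operator algebra of central charge c over a field F of characteristic p > 2, for every n ≥ 1 the class of the vector L_{-n}^p·𝟙 − δ_{p|n}·L_{-np}·𝟙 equals (-1)^{pn}(n-1)·([ω]^p − [ω]), where ω = L_{-2}𝟙 is the conformal vector and [·] denotes the image in A(V_Vir(c,0)). -/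
open Polynomial Finset


-- base: product over all of ZMod p of (X - C a) equals X^p - X
lemma aux_base (p : ℕ) [Fact p.Prime] :
    ∏ a : ZMod p, (X - C a) = X ^ p - X := by
  have hq : Fintype.card (ZMod p) = p := ZMod.card p
  have h1p : 1 < p := (Fact.out : p.Prime).one_lt
  have hmonic : (X ^ p - X : (ZMod p)[X]).Monic := by
    rw [sub_eq_add_neg]
    apply (monic_X_pow p).add_of_left
    rw [degree_neg, degree_X, degree_X_pow]
    exact_mod_cast h1p
  have hroots : (X ^ p - X : (ZMod p)[X]).roots = Finset.univ.val := by
    have := FiniteField.roots_X_pow_card_sub_X (ZMod p)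
    rwa [hq] at this
  have hdeg : (X ^ p - X : (ZMod p)[X]).natDegree = p :=
    FiniteField.X_pow_card_sub_X_natDegree_eq _ h1p
  have hcard : Multiset.card (X ^ p - X : (ZMod p)[X]).roots
      = (X ^ p - X : (ZMod p)[X]).natDegree := by
    rw [hroots, hdeg]; simpa using hq
  have := prod_multiset_X_sub_C_of_monic_of_roots_card_eq hmonic hcard
  rw [hroots] at this
  rw [← this]
  rfl

lemma aux_prod_zmod (p : ℕ) [Fact p.Prime] (c : ZMod p) :
    ∏ j ∈ Finset.range p, (X + C ((j : ZMod p) * c)) =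
      X ^ p - C (c ^ (p - 1)) * X := by
  have h1p : 1 < p := (Fact.out : p.Prime).one_lt
  rcases eq_or_ne c 0 with rfl | hc
  · simp only [mul_zero, map_zero, add_zero, prod_const, card_range]
    rw [zero_pow (by omega : p - 1 ≠ 0), map_zero, zero_mul, sub_zero]
  · have e1 : ∏ j ∈ Finset.range p, (X + C ((j : ZMod p) * c))
        = ∏ a : ZMod p, (X + C (a * c)) := by
      refine Finset.prod_nbij' (fun j => ((j : ZMod p))) (fun b => b.val)
        ?_ ?_ ?_ ?_ ?_
      · intro a _; exact Finset.mem_univ _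
      · intro b _; simpa using b.val_lt
      · intro a ha
        simp only [Finset.mem_range] at ha
        exact ZMod.val_cast_of_lt ha
      · intro b _; exact ZMod.natCast_rightInverse b
      · intro a _; rfl
    have e2 : ∏ a : ZMod p, (X + C (a * c)) = ∏ a : ZMod p, (X + C a) := by
      have := Equiv.prod_comp (Equiv.mulRight₀ c hc) (fun b => (X + C b : (ZMod p)[X]))
      simpa using this
    have e3 : ∏ a : ZMod p, (X + C a) = ∏ a : ZMod p, (X - C a) := by
      have := Equiv.prod_comp (Equiv.neg (ZMod p)) (fun b => (X - C b : (ZMod p)[X]))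
      simp only [Equiv.neg_apply, map_neg, sub_neg_eq_add] at this
      exact this
    rw [e1, e2, e3, aux_base, ZMod.pow_card_sub_one_eq_one hc, map_one, one_mul]

lemma aux_prod (p : ℕ) [Fact p.Prime] (F : Type*) [Field F] [CharP F p] (n : ℤ) :
    ∏ j ∈ Finset.range p, (X + C ((j : F) * (n : F)))
      = X ^ p - C ((n : F) ^ (p - 1)) * X := by
  have h := congrArg (Polynomial.map (ZMod.castHom (dvd_refl p) F))
    (aux_prod_zmod p ((n : ZMod p)))
  rw [Polynomial.map_prod] at h
  simpa [Polynomial.map_sub, Polynomial.map_pow, Polynomial.map_mul, Polynomial.map_add,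
    Polynomial.map_X, Polynomial.map_C, map_mul, map_pow, map_natCast, map_intCast] using h


/-- In the Zhu algebra `A(V_Vir(c,0))` of the modular
Virasoro vertex operator algebra of central charge `c` over a field `F` of
characteristic `p > 2`, for every `n ≥ 1` the class of
`L_{-n}^p·𝟙 − δ_{p|n}·L_{-np}·𝟙` equals `(−1)^{pn}·(n−1)·([ω]^p − [ω])`,
where `ω = L_{-2}𝟙` and `[·]` is the image in the Zhu algebra.

Here the setting is axiomatized: `V` carries operators `L m` (the Virasoro
modes acting on the vacuum module), `𝟙` is the vacuum (killed by `L m` for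
`m ≥ −1`, with `[L 0, L m] = −m·L m` encoding the grading), `A` is an
associative `F`-algebra and `π : V → A` the projection onto the Zhu algebra
`A = V/O(V)`, satisfying the two known facts
`[L_{-n} v] = (−1)ⁿ((n−1)([L_{-2}v] + [L_{-1}v]) + [L_0 v])` for `n ≥ 1` and
`[(L_{-2} + L_{-1})u] = [ω] * [u]`. -/
theorem statement14 (p : ℕ) (hp : p.Prime) (hp2 : 2 < p)
    (F : Type*) [Field F] [CharP F p]
    (V : Type*) [AddCommGroup V] [Module F V]
    (L : ℤ → Module.End F V) (one : V)
    (A : Type*) [Ring A] [Algebra F A] (π : V →ₗ[F] A)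
    (hvac : ∀ m : ℤ, -1 ≤ m → L m one = 0)
    (hL0 : ∀ (m : ℤ) (v : V), L 0 (L m v) = L m (L 0 v) - (m : F) • L m v)
    (h1 : ∀ n : ℤ, 1 ≤ n → ∀ v : V,
      π (L (-n) v) = (-1 : F) ^ n.toNat •
        (((n - 1 : ℤ) : F) • (π (L (-2) v) + π (L (-1) v)) + π (L 0 v)))
    (h2 : ∀ u : V, π (L (-2) u + L (-1) u) = π (L (-2) one) * π u) :
    ∀ n : ℤ, 1 ≤ n →
      π ((L (-n) ^ p) one) -
          (if (p : ℤ) ∣ n then π (L (-(n * p)) one) else 0) =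
        (-1 : F) ^ ((p : ℤ) * n).toNat •
          (((n - 1 : ℤ) : F) •
            ((π (L (-2) one)) ^ p - π (L (-2) one))) := by
  haveI : Fact p.Prime := ⟨hp⟩
  intro n hn
  set ω : A := π (L (-2) one) with hωdef
  set s : F := (-1 : F) ^ n.toNat with hsdef
  set y : A := ((n - 1 : ℤ) : F) • ω with hydef
  -- basic vacuum facts
  have hone1 : L (-1) one = 0 := hvac (-1) le_rfl
  have hone0 : L 0 one = 0 := hvac 0 (by norm_num)
  have hωmul : ω * π one = ω := by
    have h := h2 one
    rw [hone1, add_zero] at h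
    exact h.symm
  -- Frobenius fixes integers
  have hfrobZ : ∀ m : ℤ, ((m : F)) ^ p = (m : F) := by
    intro m
    have hφ : (m : F) = ZMod.castHom (dvd_refl p) F ((m : ZMod p)) := by
      simp
    rw [hφ, ← map_pow, ZMod.pow_card]
  -- Fermat's little theorem
  have hfermat : ∀ m : ℤ, ¬ (p : ℤ) ∣ m → ((m : F)) ^ (p - 1) = 1 := by
    intro m hm
    have h0 : ((m : ZMod p)) ≠ 0 := by
      rw [Ne, ZMod.intCast_zmod_eq_zero_iff_dvd]
      exact_mod_cast hm
    have hφ : (m : F) = ZMod.castHom (dvd_refl p) F ((m : ZMod p)) := by simp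
    rw [hφ, ← map_pow, ZMod.pow_card_sub_one_eq_one h0, map_one]
  -- eigenvalue of L 0
  have hL0eig : ∀ k : ℕ, L 0 ((L (-n) ^ k) one)
      = ((k : F) * ((n : ℤ) : F)) • ((L (-n) ^ k) one) := by
    intro k
    induction k with
    | zero => simp [hone0]
    | succ k ih =>
      have hv : (L (-n) ^ (k + 1)) one = L (-n) ((L (-n) ^ k) one) := by
        rw [pow_succ']; rfl
      rw [hv, hL0 (-n), ih, map_smul]
      push_cast
      module
  -- closed form
  have key : ∀ k : ℕ, π ((L (-n) ^ k) one) =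
      s ^ k • ((Polynomial.aeval y)
        (∏ j ∈ Finset.range k, (X + C ((j : F) * ((n : ℤ) : F)))) * π one) := by
    intro k
    induction k with
    | zero => simp
    | succ k ih =>
      have hv : (L (-n) ^ (k + 1)) one = L (-n) ((L (-n) ^ k) one) := by
        rw [pow_succ']; rfl
      rw [hv, h1 n hn]
      have hL2 : ((n - 1 : ℤ) : F) • (π (L (-2) ((L (-n) ^ k) one))
            + π (L (-1) ((L (-n) ^ k) one)))
          = y * π ((L (-n) ^ k) one) := by
        rw [← map_add, h2, hydef, smul_mul_assoc]
      have hL0k : π (L 0 ((L (-n) ^ k) one))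
          = ((k : F) * ((n : ℤ) : F)) • π ((L (-n) ^ k) one) := by
        rw [hL0eig k, map_smul]
      rw [hL2, hL0k, ih, Finset.prod_range_succ_comm, map_mul]
      have haf : (Polynomial.aeval y) (X + C ((k : F) * ((n : ℤ) : F)))
          = y + ((k : F) * ((n : ℤ) : F)) • (1 : A) := by
        rw [map_add, Polynomial.aeval_X, Polynomial.aeval_C, Algebra.algebraMap_eq_smul_one]
      rw [haf]
      simp only [add_mul, smul_mul_assoc, one_mul, mul_smul_comm, mul_assoc]
      module
  -- evaluate at k = p
  have hkey := key p
  have haeval : (Polynomial.aeval y)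
      (∏ j ∈ Finset.range p, (X + C ((j : F) * ((n : ℤ) : F))))
      = y ^ p - (((n : ℤ) : F) ^ (p - 1)) • y := by
    rw [aux_prod p F n, map_sub, map_pow, Polynomial.aeval_X, map_mul,
      Polynomial.aeval_C, Polynomial.aeval_X, Algebra.algebraMap_eq_smul_one,
      smul_mul_assoc, one_mul]
  have hy1 : y * π one = y := by rw [hydef, smul_mul_assoc, hωmul]
  have hp1 : p - 1 + 1 = p := Nat.succ_pred_eq_of_pos hp.pos
  have hyp : y ^ p * π one = y ^ p := by
    conv_lhs => rw [← hp1, pow_succ, mul_assoc, hy1]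
    rw [← pow_succ, hp1]
  have hclosed : π ((L (-n) ^ p) one)
      = s ^ p • (y ^ p - (((n : ℤ) : F) ^ (p - 1)) • y) := by
    rw [hkey, haeval, sub_mul, smul_mul_assoc, hy1, hyp]
  have hyfrob : y ^ p = ((n - 1 : ℤ) : F) • ω ^ p := by
    rw [hydef, _root_.smul_pow, hfrobZ]
  -- sign bookkeeping
  have htoNat : ((p : ℤ) * n).toNat = n.toNat * p := by
    have hn0 : (0 : ℤ) ≤ n := by omega
    have hcast : (p : ℤ) * n = ((n.toNat * p : ℕ) : ℤ) := by
      push_cast [Int.toNat_of_nonneg hn0]; ring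
    rw [hcast, Int.toNat_natCast]
  have hsign : (-1 : F) ^ ((p : ℤ) * n).toNat = s ^ p := by
    rw [htoNat, hsdef, pow_mul]
  have htoNat' : (n * (p : ℤ)).toNat = n.toNat * p := by
    rw [mul_comm]; exact htoNat
  by_cases hdvd : (p : ℤ) ∣ n
  · rw [if_pos hdvd]
    have hδ : π (L (-(n * p)) one) = (-1 : F) ^ (n * (p : ℤ)).toNat • ((-1 : F) • ω) := by
      have hnp : (1 : ℤ) ≤ n * p := by
        have hp1' : (1 : ℤ) ≤ (p : ℤ) := by exact_mod_cast hp.one_lt.le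
        nlinarith
      have := h1 (n * p) hnp one
      rw [hone1, hone0, map_zero, add_zero, add_zero] at this
      have hc : ((n * (p : ℤ) - 1 : ℤ) : F) = -1 := by
        push_cast [CharP.cast_eq_zero F p]; ring
      rw [this, hc]
    have hnF : ((n : ℤ) : F) = 0 := (CharP.intCast_eq_zero_iff F p n).mpr hdvd
    have hn1F : ((n - 1 : ℤ) : F) = -1 := by push_cast [hnF]; ring
    rw [hclosed, hδ, hsign, hyfrob, hnF, htoNat', hsdef, ← pow_mul]
    rw [zero_pow (by omega : p - 1 ≠ 0), zero_smul, sub_zero, hn1F]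
    module
  · rw [if_neg hdvd, sub_zero, hclosed, hsign, hyfrob, hfermat n hdvd, one_smul, hydef]
    module
end

section
/- Let V be a vertex algebra over a field F and U ⊆ V a subspace such that V is spanned by vectors u^{(1)}_{-n₁} ⋯ u^{(r)}_{-n_r} 𝟙 with r ≥ 0, u^{(i)} ∈ U, n_i ≥ 1. Then there is a surjective algebra homomorphism from the symmetric algebra S(U) onto the commutative algebra V/C₂(V) sending u ∈ U to u + C₂(V). -/
/-- A *vertex algebra* over a field `F` (of arbitrary characteristic): a vector
space `V` with a linear map `Y` sending `u ∈ V` to the family of its modes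
`(u_n)_{n ∈ ℤ}` (so `Y u n v = u_n v`), and a vacuum vector `𝟙`, subject to
truncation, the vacuum property `Y(𝟙,x) = id`, the creation property
`Y(v,x)𝟙 ∈ V[[x]]` with constant term `v`, and the Borcherds/Jacobi identity
in components (all sums are finitely supported, by truncation). -/
class VertexAlgebra (F : Type*) (V : Type*) [Field F] [AddCommGroup V]
    [Module F V] where
  Y : V →ₗ[F] ℤ → Module.End F V
  vacuum : V
  trunc : ∀ u v : V, ∃ N : ℤ, ∀ n ≥ N, Y u n v = 0
  vacuum_eq : ∀ n : ℤ, Y vacuum n = if n = -1 then 1 else 0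
  create_neg_one : ∀ v : V, Y v (-1) vacuum = v
  create_nonneg : ∀ (v : V) (n : ℤ), 0 ≤ n → Y v n vacuum = 0
  borcherds : ∀ (u v w : V) (m n k : ℤ),
    (∑ᶠ i : ℕ, ((Ring.choose m i : ℤ) : F) • Y (Y u (n + i) v) (m + k - i) w) =
    ∑ᶠ i : ℕ, ((-1 : F) ^ i * ((Ring.choose n i : ℤ) : F)) •
      (Y u (m + n - i) (Y v (k + i) w) -
        (-1 : F) ^ n.natAbs • Y v (n + k - i) (Y u (m + i) w))

open VertexAlgebra

/-- The commutation relation defining the symmetric algebra as a quotient of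
the tensor algebra. -/
inductive SymRel (R : Type*) (M : Type*) [CommRing R] [AddCommGroup M]
    [Module R M] : TensorAlgebra R M → TensorAlgebra R M → Prop
  | comm (a b : M) : SymRel R M (TensorAlgebra.ι R a * TensorAlgebra.ι R b)
      (TensorAlgebra.ι R b * TensorAlgebra.ι R a)

/-- The symmetric algebra `S(M)` of a module `M` over `R`. -/
abbrev SymmetricAlgebra' (R : Type*) (M : Type*) [CommRing R] [AddCommGroup M]
    [Module R M] := RingQuot (SymRel R M)

/-- The canonical linear map `M → S(M)`. -/
def SymmetricAlgebra'.ι (R : Type*) (M : Type*) [CommRing R] [AddCommGroup M]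
    [Module R M] : M →ₗ[R] SymmetricAlgebra' R M :=
  (RingQuot.mkAlgHom R (SymRel R M)).toLinearMap.comp (TensorAlgebra.ι R)

/-! The mode `u_{-1}` induces a commutative associative product on `V/C₂(V)` with unit `𝟙`,
because the Borcherds identity expresses commutators and associators of `(-1)`-modes through
modes `u_{-n}` with `n ≥ 2`. Modulo `C₂(V)` the spanning vector `u¹_{-n₁} ⋯ uʳ_{-n_r} 𝟙` vanishes
unless all `nᵢ = 1`, in which case it is the product `u¹ ⋯ uʳ`; hence the images of `U` generate
`V/C₂(V)` as an algebra, and the universal property of `S(U)` gives the surjection. -/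

namespace Submodule

theorem finsum_mem {R M ι : Type*} [Semiring R] [AddCommMonoid M] [Module R M]
    (p : Submodule R M) {f : ι → M} (h : ∀ i, f i ∈ p) : ∑ᶠ i, f i ∈ p :=
  finsum_induction (· ∈ p) p.zero_mem (fun _ _ => p.add_mem) h

theorem finsum_sub_mem {R M ι : Type*} [Ring R] [AddCommGroup M] [Module R M]
    (p : Submodule R M) {f : ι → M} (hf : (Function.support f).Finite) {a : ι} {t : M}
    (ha : f a - t ∈ p) (hne : ∀ i, i ≠ a → f i ∈ p) : (∑ᶠ i, f i) - t ∈ p := by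
  classical
  have hs : Function.support f ⊆ ↑(insert a hf.toFinset) := by
    simp [Set.subset_insert]
  rw [finsum_eq_sum_of_support_subset f hs,
    ← Finset.add_sum_erase _ _ (Finset.mem_insert_self a _), add_sub_right_comm]
  exact p.add_mem ha (p.sum_mem fun i hi => hne i (Finset.ne_of_mem_erase hi))

end Submodule

namespace SymmetricAlgebra'

variable {R M A : Type*} [CommRing R] [AddCommGroup M] [Module R M] [CommSemiring A]
  [Algebra R A]

def lift (f : M →ₗ[R] A) : SymmetricAlgebra' R M →ₐ[R] A :=
  RingQuot.liftAlgHom R ⟨TensorAlgebra.lift R f, fun _ _ ⟨a, b⟩ => by simp [mul_comm]⟩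

@[simp]
theorem lift_ι (f : M →ₗ[R] A) (m : M) : lift f (ι R M m) = f m := by
  simp [lift, ι]

theorem adjoin_range_le_range_lift (f : M →ₗ[R] A) :
    Algebra.adjoin R (Set.range f) ≤ (lift f).range :=
  Algebra.adjoin_le fun _ ⟨m, hm⟩ => ⟨ι R M m, (lift_ι f m).trans hm⟩

end SymmetricAlgebra'

namespace VertexAlgebra

variable {F V : Type*} [Field F] [AddCommGroup V] [Module F V] [VertexAlgebra F V]

variable (F V) in
def C₂ : Submodule F V :=
  Submodule.span F {x : V | ∃ (u v : V) (k : ℕ), x = Y (F := F) u (-2 - (k : ℤ)) v}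

theorem Y_mem_C₂ (u v : V) {n : ℤ} (hn : n ≤ -2) : Y (F := F) u n v ∈ C₂ F V :=
  Submodule.subset_span ⟨u, v, (-2 - n).toNat, by rw [Int.toNat_of_nonneg (by omega)]; ring_nf⟩

section Products

variable {p : Submodule F V}

theorem Y_neg_one_comm_mem (hp : ∀ (u v : V) (n : ℤ), n ≤ -2 → Y (F := F) u n v ∈ p)
    (u v w : V) :
    Y (F := F) u (-1) (Y (F := F) v (-1) w) - Y (F := F) v (-1) (Y (F := F) u (-1) w) ∈ p := by
  -- Borcherds identity with `(m, n, k) = (-1, 0, -1)`: the left side lies in `p`, and the right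
  -- side reduces to its `i = 0` term, the commutator.
  have h := borcherds (F := F) u v w (-1) 0 (-1)
  conv_rhs at h => rw [finsum_eq_single _ 0 fun i hi => by
    simp [Ring.choose_zero_pos ℤ (Nat.pos_of_ne_zero hi)]]
  have hmem := p.finsum_mem fun i : ℕ => p.smul_mem ((Ring.choose (-1 : ℤ) i : ℤ) : F)
    (hp (Y (F := F) u (0 + i) v) w (-1 + -1 - i) (by omega))
  rw [h] at hmem
  simpa [Ring.choose_zero_right] using hmem

theorem Y_neg_one_assoc_mem (hp : ∀ (u v : V) (n : ℤ), n ≤ -2 → Y (F := F) u n v ∈ p)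
    (u v w : V) :
    Y (F := F) (Y (F := F) u (-1) v) (-1) w - Y (F := F) u (-1) (Y (F := F) v (-1) w) ∈ p := by
  -- Borcherds identity with `(m, n, k) = (0, -1, -1)`: only its `i = 0` terms survive modulo `p`.
  have h := borcherds (F := F) u v w 0 (-1) (-1)
  conv_lhs at h => rw [finsum_eq_single _ 0 fun i hi => by
    simp [Ring.choose_zero_pos ℤ (Nat.pos_of_ne_zero hi)]]
  simp only [Ring.choose_zero_right, Nat.cast_zero, Int.cast_one, one_smul] at h
  rw [show (0 : ℤ) + -1 - 0 = -1 by norm_num, show (-1 : ℤ) + 0 = -1 by norm_num] at h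
  rw [h]
  refine p.finsum_sub_mem ?_ (a := 0) ?_ fun i hi => ?_
  · obtain ⟨N₁, hN₁⟩ := trunc (F := F) v w
    obtain ⟨N₂, hN₂⟩ := trunc (F := F) u w
    refine (Set.finite_Iio (N₁.toNat + N₂.toNat + 1)).subset fun i hi => ?_
    by_contra hge
    simp only [Set.mem_Iio, not_lt] at hge
    have h₁ : Y (F := F) v (-1 + i) w = 0 := hN₁ _ (by omega)
    have h₂ : Y (F := F) u (0 + i) w = 0 := hN₂ _ (by omega)
    exact hi (by simp only [h₁, h₂, map_zero, sub_zero, smul_zero])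
  · simpa [Ring.choose_zero_right] using
      p.neg_mem (hp v (Y (F := F) u 0 w) (-2) le_rfl)
  · exact p.smul_mem _ (p.sub_mem (hp _ _ _ (by omega))
      (p.smul_mem _ (hp _ _ _ (by omega))))

end Products

section Quotient

variable {p : Submodule F V} {mul : V ⧸ p → V ⧸ p → V ⧸ p}

abbrev quotientCommRing (hp : ∀ (u v : V) (n : ℤ), n ≤ -2 → Y (F := F) u n v ∈ p)
    (hmul : ∀ u v : V, mul (Submodule.Quotient.mk u) (Submodule.Quotient.mk v) =
      Submodule.Quotient.mk (Y (F := F) u (-1) v)) : CommRing (V ⧸ p) :=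
  -- Installing `mul` as `*` first lets `hmul` be used by rewriting in the ring axioms.
  letI : Mul (V ⧸ p) := ⟨mul⟩
  letI : One (V ⧸ p) := ⟨Submodule.Quotient.mk (vacuum (F := F))⟩
  have hmk (u v : V) : (Submodule.Quotient.mk u * Submodule.Quotient.mk v : V ⧸ p) =
      Submodule.Quotient.mk (Y (F := F) u (-1) v) := hmul u v
  have hone : (1 : V ⧸ p) = Submodule.Quotient.mk (vacuum (F := F)) := rfl
  have hzero : (0 : V ⧸ p) = Submodule.Quotient.mk 0 := rfl
  { (inferInstance : AddCommGroup (V ⧸ p)) with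
    mul_assoc x y z := by
      induction x using Submodule.Quotient.induction_on
      induction y using Submodule.Quotient.induction_on
      induction z using Submodule.Quotient.induction_on
      simp only [hmk, Submodule.Quotient.eq]
      exact Y_neg_one_assoc_mem hp _ _ _
    one_mul x := by
      induction x using Submodule.Quotient.induction_on
      simp [hone, hmk, vacuum_eq]
    mul_one x := by
      induction x using Submodule.Quotient.induction_on
      rw [hone, hmk, create_neg_one]
    left_distrib x y z := by
      induction x using Submodule.Quotient.induction_on
      induction y using Submodule.Quotient.induction_on
      induction z using Submodule.Quotient.induction_on
      simp only [← Submodule.Quotient.mk_add, hmk, map_add]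
    right_distrib x y z := by
      induction x using Submodule.Quotient.induction_on
      induction y using Submodule.Quotient.induction_on
      induction z using Submodule.Quotient.induction_on
      simp only [← Submodule.Quotient.mk_add, hmk, map_add, Pi.add_apply, LinearMap.add_apply]
    zero_mul x := by
      induction x using Submodule.Quotient.induction_on
      rw [hzero, hmk, map_zero, Pi.zero_apply, LinearMap.zero_apply]
    mul_zero x := by
      induction x using Submodule.Quotient.induction_on
      rw [hzero, hmk, map_zero]
    mul_comm x y := by
      induction x using Submodule.Quotient.induction_on
      induction y using Submodule.Quotient.induction_on
      simpa [hmk, Submodule.Quotient.eq, create_neg_one] using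
        Y_neg_one_comm_mem hp _ _ (vacuum (F := F)) }

abbrev quotientAlgebra (hp : ∀ (u v : V) (n : ℤ), n ≤ -2 → Y (F := F) u n v ∈ p)
    (hmul : ∀ u v : V, mul (Submodule.Quotient.mk u) (Submodule.Quotient.mk v) =
      Submodule.Quotient.mk (Y (F := F) u (-1) v)) :
    letI := quotientCommRing hp hmul
    Algebra F (V ⧸ p) :=
  letI := quotientCommRing hp hmul
  have hmk (u v : V) : (Submodule.Quotient.mk u * Submodule.Quotient.mk v : V ⧸ p) =
      Submodule.Quotient.mk (Y (F := F) u (-1) v) := hmul u v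
  Algebra.ofModule
    (fun r x y => by
      induction x using Submodule.Quotient.induction_on
      induction y using Submodule.Quotient.induction_on
      rw [← Submodule.Quotient.mk_smul, hmk, hmk, map_smul, Pi.smul_apply,
        LinearMap.smul_apply, Submodule.Quotient.mk_smul])
    (fun r x y => by
      induction x using Submodule.Quotient.induction_on
      induction y using Submodule.Quotient.induction_on
      rw [← Submodule.Quotient.mk_smul, hmk, hmk, map_smul, Submodule.Quotient.mk_smul])

end Quotient

theorem adjoin_image_eq_top {A : Type*} [CommSemiring A] [Algebra F A] (q : V →ₗ[F] A)
    (hq : Function.Surjective q) (hq_vacuum : q (vacuum (F := F)) = 1)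
    (hq_neg_one : ∀ u v : V, q (Y (F := F) u (-1) v) = q u * q v)
    (hq_le : ∀ (u v : V) (n : ℤ), n ≤ -2 → q (Y (F := F) u n v) = 0) {U : Submodule F V}
    (hspan : Submodule.span F
      {x : V | ∃ l : List (V × ℕ), (∀ a ∈ l, a.1 ∈ U) ∧
        x = l.foldr (fun a w => Y (F := F) a.1 (-(a.2 : ℤ) - 1) w) (vacuum (F := F))} = ⊤) :
    Algebra.adjoin F (q '' U) = ⊤ := by
  have hword (l : List (V × ℕ)) (hl : ∀ a ∈ l, a.1 ∈ U) :
      q (l.foldr (fun a w => Y (F := F) a.1 (-(a.2 : ℤ) - 1) w) (vacuum (F := F))) ∈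
        Algebra.adjoin F (q '' U) := by
    induction l with
    | nil => simpa only [List.foldr_nil, hq_vacuum] using one_mem _
    | cons a l ih =>
      obtain ⟨u, _ | n⟩ := a
      · rw [List.foldr_cons, Nat.cast_zero, neg_zero, zero_sub, hq_neg_one]
        exact mul_mem (Algebra.subset_adjoin ⟨u, hl _ List.mem_cons_self, rfl⟩)
          (ih fun a ha => hl a (List.mem_cons_of_mem _ ha))
      · rw [List.foldr_cons, hq_le _ _ _ (by omega)]
        exact zero_mem _
  have hle : (⊤ : Submodule F V) ≤
      (Subalgebra.toSubmodule (Algebra.adjoin F (q '' U))).comap q := by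
    rw [← hspan, Submodule.span_le]
    rintro _ ⟨l, hl, rfl⟩
    exact hword l hl
  refine eq_top_iff.2 fun x _ => ?_
  obtain ⟨v, rfl⟩ := hq x
  exact hle Submodule.mem_top

end VertexAlgebra

/-- Let `V` be a vertex algebra over a field `F` and
`U ⊆ V` a subspace such that `V` is spanned by the vectors
`u¹_{-n₁} ⋯ uʳ_{-n_r} 𝟙` with `r ≥ 0`, `uⁱ ∈ U`, `nᵢ ≥ 1`.  Then there is a
surjective algebra homomorphism `S(U) → V/C₂(V)` sending `u ∈ U` to
`u + C₂(V)` (here `V/C₂(V)` carries the commutative associative product `mul`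
induced by `u·v = u_{-1}v`, as in Statement 16). -/
theorem statement17 (F : Type*) [Field F] (V : Type*) [AddCommGroup V]
    [Module F V] [VertexAlgebra F V] (U : Submodule F V)
    (hspan : Submodule.span F
      {x : V | ∃ l : List (V × ℕ), (∀ q ∈ l, q.1 ∈ (U : Set V)) ∧
        x = l.foldr (fun q w => Y (F := F) q.1 (-(q.2 : ℤ) - 1) w)
          (vacuum (F := F) (V := V))} = ⊤)
    (C2 : Submodule F V)
    (hC2 : C2 = Submodule.span F
      {x : V | ∃ (u v : V) (k : ℕ), x = Y (F := F) u (-2 - (k : ℤ)) v})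
    (mul : (V ⧸ C2) → (V ⧸ C2) → (V ⧸ C2))
    (hmul : ∀ u v : V, mul (Submodule.Quotient.mk u) (Submodule.Quotient.mk v) =
      Submodule.Quotient.mk (Y (F := F) u (-1) v)) :
    ∃ π : SymmetricAlgebra' F U →ₗ[F] V ⧸ C2,
      Function.Surjective π ∧
      π 1 = Submodule.Quotient.mk (vacuum (F := F) (V := V)) ∧
      (∀ x y : SymmetricAlgebra' F U, π (x * y) = mul (π x) (π y)) ∧
      ∀ u : U, π (SymmetricAlgebra'.ι F U u) = Submodule.Quotient.mk (u : V) := by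
  have hY_mem (u v : V) (n : ℤ) (hn : n ≤ -2) : Y (F := F) u n v ∈ C2 := hC2 ▸ Y_mem_C₂ u v hn
  let _ := quotientCommRing hY_mem hmul
  let _ := quotientAlgebra hY_mem hmul
  let π := SymmetricAlgebra'.lift (C2.mkQ ∘ₗ U.subtype)
  have hgen : Algebra.adjoin F (Set.range (C2.mkQ ∘ₗ U.subtype)) = ⊤ := by
    rw [LinearMap.coe_comp, Set.range_comp, U.coe_subtype, Subtype.range_coe]
    exact adjoin_image_eq_top C2.mkQ C2.mkQ_surjective rfl (fun u v => (hmul u v).symm)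
      (fun u v n hn => (Submodule.Quotient.mk_eq_zero C2).2 (hY_mem u v n hn)) hspan
  refine ⟨π.toLinearMap, fun x => ?_, map_one π, map_mul π, SymmetricAlgebra'.lift_ι _⟩
  exact SymmetricAlgebra'.adjoin_range_le_range_lift _ (hgen ▸ Algebra.mem_top)
end

section
/- In the ℤ-graded Zhu algebra setting: let V be a ℤ-graded vertex algebra over a field F, v ∈ V homogeneous of degree d, and k ∈ ℕ. Then 𝒟^{(k)} v ≡ C(−d, k) · v modulo O(V), where 𝒟^{(k)} v = v_{-k-1}𝟙 and C(−d, k) is the binomial coefficient with integer upper argument, interpreted in F. -/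
open VertexAlgebra

/-- Let `V` be a ℤ-graded vertex algebra over a field `F`
(grading `G : ℤ → Submodule F V`, internal direct sum, `𝟙 ∈ G 0`, and
`u_k (G n) ⊆ G (m+n-k-1)` for `u ∈ G m`).  Let `O(V)` be the span of the
elements `a ∘ₙ b = Σ_{i≥0} C(deg a, i)·a_{i-n-2} b` for homogeneous `a`,
`n ∈ ℕ`, `b ∈ V`.  If `v` is homogeneous of degree `d` and `k ∈ ℕ`, then
`𝒟^{(k)} v := v_{-k-1}𝟙 ≡ C(−d, k) • v (mod O(V))`, where `C(−d,k)` is the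
binomial coefficient with integer upper argument, interpreted in `F`. -/
theorem statement18 (F : Type*) [Field F] (V : Type*) [AddCommGroup V]
    [Module F V] [VertexAlgebra F V] (G : ℤ → Submodule F V)
    (hinternal : DirectSum.IsInternal fun n : ℤ => G n)
    (hvac : vacuum (F := F) (V := V) ∈ G 0)
    (hgr : ∀ (m n k : ℤ) (u v : V), u ∈ G m → v ∈ G n →
      Y (F := F) u k v ∈ G (m + n - k - 1))
    (O : Submodule F V)
    (hO : O = Submodule.span F
      {x : V | ∃ (d : ℤ) (a : V), a ∈ G d ∧ ∃ (n : ℕ) (b : V),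
        x = ∑ᶠ i : ℕ, ((Ring.choose d i : ℤ) : F) •
          Y (F := F) a ((i : ℤ) - (n : ℤ) - 2) b})
    (d : ℤ) (v : V) (hv : v ∈ G d) (k : ℕ) :
    Y (F := F) v (-(k : ℤ) - 1) (vacuum (F := F) (V := V)) -
      ((Ring.choose (-d) k : ℤ) : F) • v ∈ O := by
  induction k using Nat.strong_induction_on with
  | _ k IH =>
  rcases k with _ | m
  · simp only [Nat.cast_zero, neg_zero, zero_sub, Ring.choose_zero_right, Int.cast_one,
      one_smul, create_neg_one, sub_self]
    exact zero_mem O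
  · -- k = m + 1
    -- Step A: finsum = finite sum
    have hfin : (∑ᶠ i : ℕ, ((Ring.choose d i : ℤ) : F) •
          Y (F := F) v ((i : ℤ) - (m : ℤ) - 2) (vacuum (F := F) (V := V)))
        = ∑ i ∈ Finset.range (m + 2), ((Ring.choose d i : ℤ) : F) •
          Y (F := F) v ((i : ℤ) - (m : ℤ) - 2) (vacuum (F := F) (V := V)) := by
      apply finsum_eq_sum_of_support_subset
      intro i hi
      simp only [Function.mem_support] at hi
      simp only [Finset.coe_range, Set.mem_Iio]
      by_contra hc
      push_neg at hc
      have : Y (F := F) v ((i : ℤ) - (m : ℤ) - 2) (vacuum (F := F) (V := V)) = 0 :=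
        create_nonneg v _ (by omega)
      rw [this, smul_zero] at hi
      exact hi rfl
    have hx : (∑ i ∈ Finset.range (m + 2), ((Ring.choose d i : ℤ) : F) •
          Y (F := F) v ((i : ℤ) - (m : ℤ) - 2) (vacuum (F := F) (V := V))) ∈ O := by
      rw [hO, ← hfin]
      exact Submodule.subset_span ⟨d, v, hv, m, vacuum (F := F) (V := V), rfl⟩
    -- Step C: Vandermonde in ℤ
    have hSZ : ∑ j ∈ Finset.range (m + 1),
        Ring.choose d (j + 1) * Ring.choose (-d) (m - j) = -(Ring.choose (-d) (m + 1)) := by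
      have hV := Ring.add_choose_eq (r := d) (s := -d) (m + 1) (Commute.all _ _)
      rw [Finset.Nat.sum_antidiagonal_eq_sum_range_succ_mk, Finset.sum_range_succ'] at hV
      simp only [add_neg_cancel, Ring.choose_zero_succ, Nat.succ_sub_succ_eq_sub,
        Ring.choose_zero_right, Nat.sub_zero, one_mul] at hV
      linarith
    have hS : ∑ j ∈ Finset.range (m + 1),
        ((Ring.choose d (j + 1) : ℤ) : F) * ((Ring.choose (-d) (m - j) : ℤ) : F)
        = -((Ring.choose (-d) (m + 1) : ℤ) : F) := by
      have := congrArg (Int.cast : ℤ → F) hSZ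
      push_cast at this
      exact this
    -- Step E: rewrite the sum
    have hsum : (∑ i ∈ Finset.range (m + 2), ((Ring.choose d i : ℤ) : F) •
          Y (F := F) v ((i : ℤ) - (m : ℤ) - 2) (vacuum (F := F) (V := V)))
        = Y (F := F) v (-((m + 1 : ℕ) : ℤ) - 1) (vacuum (F := F) (V := V)) +
          ∑ j ∈ Finset.range (m + 1), ((Ring.choose d (j + 1) : ℤ) : F) •
            Y (F := F) v (-(((m - j : ℕ)) : ℤ) - 1) (vacuum (F := F) (V := V)) := by
      rw [Finset.sum_range_succ', add_comm]
      congr 1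
      · have h0 : ((0 : ℕ) : ℤ) - (m : ℤ) - 2 = -((m + 1 : ℕ) : ℤ) - 1 := by push_cast; ring
        rw [h0, Ring.choose_zero_right, Int.cast_one, one_smul]
      · refine Finset.sum_congr rfl fun j hj => ?_
        have hj' : j < m + 1 := Finset.mem_range.mp hj
        have hm : (((j + 1 : ℕ)) : ℤ) - (m : ℤ) - 2 = -(((m - j : ℕ)) : ℤ) - 1 := by omega
        rw [hm]
    have key : Y (F := F) v (-((m + 1 : ℕ) : ℤ) - 1) (vacuum (F := F) (V := V)) -
          ((Ring.choose (-d) (m + 1) : ℤ) : F) • v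
        = (∑ i ∈ Finset.range (m + 2), ((Ring.choose d i : ℤ) : F) •
          Y (F := F) v ((i : ℤ) - (m : ℤ) - 2) (vacuum (F := F) (V := V)))
          - ∑ j ∈ Finset.range (m + 1), ((Ring.choose d (j + 1) : ℤ) : F) •
            (Y (F := F) v (-(((m - j : ℕ)) : ℤ) - 1) (vacuum (F := F) (V := V)) -
              ((Ring.choose (-d) (m - j) : ℤ) : F) • v) := by
      rw [hsum]
      simp only [smul_sub, Finset.sum_sub_distrib, smul_smul]
      rw [← Finset.sum_smul, hS, neg_smul]
      abel
    rw [key]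
    refine sub_mem hx (Submodule.sum_mem O fun j hj => Submodule.smul_mem O _ ?_)
    exact IH (m - j) (by omega)
end
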